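/- Under the mixture setup, for any δ ∈ (1/2, 1] one has P(max_{1 ≤ i < j ≤ n} |X_i − X_j| ≥ δ) = 2 · P( {max_{1 ≤ i < j ≤ n} |X̃_i − X̃_j| ≥ δ} ∩ Ã ). -/

import Mathlib

/-!
On `{U = 0} ∪ {U = 1}` the map `x ↦ U x + (1 - U)(1 - x)` is the identity or the reflection
`x ↦ 1 - x`, so it preserves pairwise distances and the event is the same for `X̃` as for `X`
on `Ã`. Up to a null set that event lies in `⨆ i, G i`, which is independent of `U`; since `Ã`
picks `A` or `Aᶜ` according to a fair coin `U`, it meets the event in half its probability.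
-/

open MeasureTheory

noncomputable section

/-- The event that some pair of the variables differ by at least `δ`. -/
def maxEvent {Ω : Type} {n : ℕ} (X : Fin n → Ω → ℝ) (δ : ℝ) : Set Ω :=
  {ω | ∃ i j : Fin n, i < j ∧ δ ≤ |X i ω - X j ω|}

open ProbabilityTheory Filter
open scoped ENNReal

section maxEvent

variable {Ω : Type} {n : ℕ}

theorem measurableSet_maxEvent {m : MeasurableSpace Ω} {X : Fin n → Ω → ℝ}
    (hX : ∀ i, Measurable[m] (X i)) (δ : ℝ) : MeasurableSet[m] (maxEvent X δ) := by
  simp only [maxEvent, Set.ofPred_exists, Set.ofPred_and]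
  exact .iUnion fun i => .iUnion fun j =>
    (MeasurableSet.const _).inter (measurableSet_le measurable_const ((hX i).sub (hX j)).abs)

theorem maxEvent_ae_congr {m : MeasurableSpace Ω} {P : Measure Ω} {X Y : Fin n → Ω → ℝ}
    (h : ∀ i, X i =ᵐ[P] Y i) (δ : ℝ) : maxEvent X δ =ᵐ[P] maxEvent Y δ := by
  rw [eventuallyEq_set]
  filter_upwards [ae_all_iff.mpr h] with ω hω
  simp only [maxEvent, Set.mem_ofPred_eq, hω]

theorem maxEvent_inter_eq_of_abs_sub_eq {X Y : Fin n → Ω → ℝ} {S : Set Ω}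
    (h : ∀ ω ∈ S, ∀ i j, |Y i ω - Y j ω| = |X i ω - X j ω|) (δ : ℝ) :
    maxEvent Y δ ∩ S = maxEvent X δ ∩ S := by
  ext ω
  simp only [Set.mem_inter_iff, maxEvent, Set.mem_ofPred_eq]
  constructor <;> rintro ⟨⟨i, j, hij, hδ⟩, hω⟩ <;> refine ⟨⟨i, j, hij, ?_⟩, hω⟩
  exacts [h ω hω i j ▸ hδ, (h ω hω i j).symm ▸ hδ]

end maxEvent

theorem abs_flip_sub_flip {u : ℝ} (hu : u = 0 ∨ u = 1) (x y : ℝ) :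
    |(u * x + (1 - u) * (1 - x)) - (u * y + (1 - u) * (1 - y))| = |x - y| := by
  have : (u * x + (1 - u) * (1 - x)) - (u * y + (1 - u) * (1 - y)) = (2 * u - 1) * (x - y) := by
    ring
  rw [this, abs_mul]
  rcases hu with rfl | rfl <;> norm_num

theorem measure_inter_mixture {Ω : Type*} {m₁ m₂ : MeasurableSpace Ω} [mΩ : MeasurableSpace Ω]
    {P : Measure Ω} (hindep : Indep m₁ m₂ P) (h₁ : m₁ ≤ mΩ) (h₂ : m₂ ≤ mΩ)
    {V₁ V₀ E A : Set Ω} (hV₁ : MeasurableSet[m₁] V₁) (hV₀ : MeasurableSet[m₁] V₀)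
    (hE : MeasurableSet[m₂] E) (hA : MeasurableSet[m₂] A) {c : ℝ≥0∞}
    (hPV₁ : P V₁ = c) (hPV₀ : P V₀ = c) :
    P (E ∩ ((A ∩ V₁) ∪ (Aᶜ ∩ V₀))) = c * P E := by
  have hind := (Indep_iff _ _ _).mp hindep
  have hsplit : E ∩ ((A ∩ V₁) ∪ (Aᶜ ∩ V₀)) = (V₁ ∩ (E ∩ A)) ∪ (V₀ ∩ (E \ A)) := by
    ext ω
    simp only [Set.mem_inter_iff, Set.mem_union, Set.mem_compl_iff, Set.mem_sdiff]
    tauto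
  have hdisj : Disjoint (V₁ ∩ (E ∩ A)) (V₀ ∩ (E \ A)) :=
    Set.disjoint_sdiff_inter.symm.mono Set.inter_subset_right Set.inter_subset_right
  calc P (E ∩ ((A ∩ V₁) ∪ (Aᶜ ∩ V₀)))
      = P (V₁ ∩ (E ∩ A)) + P (V₀ ∩ (E \ A)) := by
        rw [hsplit, measure_union hdisj ((h₁ _ hV₀).inter ((h₂ _ hE).diff (h₂ _ hA)))]
    _ = c * (P (E ∩ A) + P (E \ A)) := by
        rw [hind _ _ hV₁ (hE.inter hA), hind _ _ hV₀ (hE.diff hA), hPV₁, hPV₀, mul_add]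
    _ = c * P E := by rw [measure_inter_add_sdiff E (h₂ _ hA)]

theorem mixture_prob_identity {Ω : Type} [mΩ : MeasurableSpace Ω] (P : Measure Ω)
    [IsProbabilityMeasure P] (n : ℕ)
    (A : Set Ω) (hA : MeasurableSet A)
    (G : Fin n → MeasurableSpace Ω) (hG : ∀ i, G i ≤ mΩ)
    (X : Fin n → Ω → ℝ)
    (hX : ∀ i, X i =ᵐ[P] P[A.indicator (fun _ => (1 : ℝ)) | G i])
    (U : Ω → ℝ) (hU : Measurable U)
    (hU0 : P {ω | U ω = 0} = 1 / 2) (hU1 : P {ω | U ω = 1} = 1 / 2)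
    (hindep : ProbabilityTheory.Indep (MeasurableSpace.comap U inferInstance)
      ((⨆ i, G i) ⊔ MeasurableSpace.generateFrom {A}) P)
    (Xt : Fin n → Ω → ℝ)
    (hXt : Xt = fun i ω => U ω * X i ω + (1 - U ω) * (1 - X i ω))
    (At : Set Ω) (hAt : At = (A ∩ {ω | U ω = 1}) ∪ (Aᶜ ∩ {ω | U ω = 0})) :
    ∀ δ ∈ Set.Ioc (1 / 2 : ℝ) 1,
      (P (maxEvent X δ)).toReal = 2 * (P (maxEvent Xt δ ∩ At)).toReal := by
  intro δ _
  set Y : Fin n → Ω → ℝ := fun i => P[A.indicator (fun _ => (1 : ℝ)) | G i]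
  have hY : ∀ i, Measurable[⨆ i, G i] (Y i) := fun i =>
    stronglyMeasurable_condExp.measurable.mono (le_iSup G i) le_rfl
  have hXY : maxEvent X δ =ᵐ[P] maxEvent Y δ := maxEvent_ae_congr hX δ
  have hAt_flip : maxEvent Xt δ ∩ At = maxEvent X δ ∩ At := by
    refine maxEvent_inter_eq_of_abs_sub_eq (fun ω hω i j => ?_) δ
    have hUω : U ω = 0 ∨ U ω = 1 := by
      rw [hAt] at hω
      rcases hω with h | h
      exacts [Or.inr h.2, Or.inl h.2]
    simp only [hXt, abs_flip_sub_flip hUω]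
  have hAt_half : P (maxEvent Y δ ∩ At) = 1 / 2 * P (maxEvent Y δ) := by
    rw [hAt]
    refine measure_inter_mixture hindep hU.comap_le
      (sup_le (iSup_le hG) (MeasurableSpace.generateFrom_le fun t ht => ht ▸ hA))
      ⟨{1}, measurableSet_singleton 1, rfl⟩ ⟨{0}, measurableSet_singleton 0, rfl⟩
      (le_sup_left (α := MeasurableSpace Ω) _ (measurableSet_maxEvent hY δ))
      (le_sup_right (α := MeasurableSpace Ω) _ (MeasurableSpace.measurableSet_generateFrom rfl))
      hU1 hU0
  rw [hAt_flip, measure_congr hXY, measure_congr (hXY.inter (EventuallyEq.refl _ At)), hAt_half,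
    ENNReal.toReal_mul]
  norm_num [← mul_assoc]
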